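/- arXiv:1207.0946 — 2 statements merged into one kernel-verified Lean document; each statement's English description precedes it below -/
import Mathlib

section
/- Let (e_j) be a quasi-greedy basis of a complex Banach space X with constant K. For all unimodular complex numbers ε_j and all finite sets A, (1/(4√2 K))·‖Σ_{j∈A} e_j‖ ≤ ‖Σ_{j∈A} ε_j e_j‖ ≤ 4√2 K·‖Σ_{j∈A} e_j‖. -/
open Finset NNReal ENNReal Filter

noncomputable section

variable (𝕜 X : Type*) [RCLike 𝕜] [NormedAddCommGroup X] [NormedSpace 𝕜 X]

/-- A normalized Schauder basis of a (real or complex) Banach space, given together with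
its biorthogonal coefficient functionals. -/
structure GreedyBasis where
  e : ℕ → X
  coeff : ℕ → X →L[𝕜] 𝕜
  norm_e : ∀ j, ‖e j‖ = 1
  biorth : ∀ i j, coeff i (e j) = if i = j then 1 else 0
  expansion : ∀ x : X,
    Tendsto (fun n => ∑ j ∈ Finset.range n, coeff j x • e j) atTop (nhds x)

variable {𝕜 X}

namespace GreedyBasis

variable (b : GreedyBasis 𝕜 X)

/-- The coordinate projection `S_A` onto a finite set `A` of indices. -/
def S (A : Finset ℕ) : X →L[𝕜] X := ∑ j ∈ A, (b.coeff j).smulRight (b.e j)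

/-- `π` is a greedy (decreasing) rearrangement of the coefficients of `x`. -/
def Greedy (x : X) (π : Equiv.Perm ℕ) : Prop :=
  ∀ k : ℕ, ‖b.coeff (π (k + 1)) x‖ ≤ ‖b.coeff (π k) x‖

/-- The thresholding greedy algorithm of order `N` (relative to the greedy ordering `π`). -/
def G (N : ℕ) (π : Equiv.Perm ℕ) (x : X) : X :=
  ∑ k ∈ Finset.range N, b.coeff (π k) x • b.e (π k)

/-- The best `N`-term approximation error `σ_N(x)`. -/
def σ (N : ℕ) (x : X) : ℝ≥0∞ :=
  ⨅ (A : Finset ℕ) (_ : A.card ≤ N) (c : ℕ → 𝕜),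
    (‖x - ∑ j ∈ A, c j • b.e j‖₊ : ℝ≥0∞)

/-- The expansional best approximation error `σ̃_N(x)`. -/
def σt (N : ℕ) (x : X) : ℝ≥0∞ :=
  ⨅ (A : Finset ℕ) (_ : A.card = N), (‖x - b.S A x‖₊ : ℝ≥0∞)

/-- `k_N = sup_{|A| ≤ N} ‖S_A‖`. -/
def kN (N : ℕ) : ℝ≥0∞ := ⨆ (A : Finset ℕ) (_ : A.card ≤ N), (‖b.S A‖₊ : ℝ≥0∞)

/-- Right democracy function `h_r(n) = sup_{|A| = n} ‖∑_{j ∈ A} e_j‖`. -/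
def hr (n : ℕ) : ℝ≥0∞ := ⨆ (A : Finset ℕ) (_ : A.card = n), (‖∑ j ∈ A, b.e j‖₊ : ℝ≥0∞)

/-- Left democracy function `h_l(n) = inf_{|A| = n} ‖∑_{j ∈ A} e_j‖`. -/
def hl (n : ℕ) : ℝ≥0∞ := ⨅ (A : Finset ℕ) (_ : A.card = n), (‖∑ j ∈ A, b.e j‖₊ : ℝ≥0∞)

/-- `μ(N) = sup_{1 ≤ n ≤ N} h_r(n)/h_l(n)`. -/
def μ (N : ℕ) : ℝ≥0∞ := ⨆ n ∈ Finset.Icc 1 N, b.hr n / b.hl n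

/-- The basis is quasi-greedy with constant `K`:  `‖G_N(x)‖ ≤ K ‖x‖` for every `x`, every `N`,
and every greedy rearrangement. -/
def QuasiGreedy (K : ℝ≥0) : Prop :=
  ∀ (x : X) (π : Equiv.Perm ℕ), b.Greedy x π → ∀ N : ℕ, ‖b.G N π x‖ ≤ K * ‖x‖

/-- The Lebesgue constant `C_N = sup_x ‖x - G_N(x)‖ / σ_N(x)`. -/
def CN (N : ℕ) : ℝ≥0∞ :=
  ⨆ (x : X) (π : Equiv.Perm ℕ) (_ : b.Greedy x π) (_ : b.σ N x ≠ 0),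
    (‖x - b.G N π x‖₊ : ℝ≥0∞) / b.σ N x

/-- `C̃_N = sup_x ‖x - G_N(x)‖ / σ̃_N(x)`. -/
def CtN (N : ℕ) : ℝ≥0∞ :=
  ⨆ (x : X) (π : Equiv.Perm ℕ) (_ : b.Greedy x π) (_ : b.σt N x ≠ 0),
    (‖x - b.G N π x‖₊ : ℝ≥0∞) / b.σt N x

/-- `D_N = sup_x σ̃_N(x) / σ_N(x)`. -/
def DN (N : ℕ) : ℝ≥0∞ :=
  ⨆ (x : X) (_ : b.σ N x ≠ 0), b.σt N x / b.σ N x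

end GreedyBasis


section Aux

/-- There is a permutation of `ℕ` enumerating `A` first, with `B ⊆ A` at the very start. -/
lemma exists_perm_aux (A B : Finset ℕ) (hBA : B ⊆ A) :
    ∃ π : Equiv.Perm ℕ, (∀ k, (π k ∈ A ↔ k < A.card)) ∧
      (Finset.range B.card).image (π : ℕ → ℕ) = B := by
  classical
  set L : List ℕ := B.sort (· ≤ ·) ++ (A \ B).sort (· ≤ ·) with hLdef
  have hcard : (A \ B).card + B.card = A.card := Finset.card_sdiff_add_card_eq_card hBA
  have hlen : L.length = A.card := by
    simp only [hLdef, List.length_append, Finset.length_sort]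
    omega
  have hmemL : ∀ j, j ∈ L ↔ j ∈ A := by
    intro j
    simp only [hLdef, List.mem_append, Finset.mem_sort, Finset.mem_sdiff]
    constructor
    · rintro (h | ⟨h, -⟩)
      · exact hBA h
      · exact h
    · intro h
      by_cases hj : j ∈ B
      · exact Or.inl hj
      · exact Or.inr ⟨h, hj⟩
  have hnd : L.Nodup := by
    rw [hLdef, List.nodup_append]
    refine ⟨Finset.sort_nodup _ _, Finset.sort_nodup _ _, ?_⟩
    intro a ha c hc
    rw [Finset.mem_sort] at ha hc
    exact fun h => (Finset.mem_sdiff.1 hc).2 (h ▸ ha)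
  -- complement enumeration
  set S : Set ℕ := {a | a ∉ A} with hSdef
  haveI : Infinite S := by
    rw [Set.infinite_coe_iff]
    have : S = (↑A : Set ℕ)ᶜ := by ext a; simp [hSdef]
    rw [this]
    exact (A.finite_toSet).infinite_compl
  haveI : DecidablePred (· ∈ S) := fun a => by
    simp only [hSdef, Set.mem_setOf_eq]; infer_instance
  haveI := Nat.Subtype.denumerable S
  set c : ℕ → ℕ := fun i => ((Denumerable.eqv S).symm i : ℕ) with hcdef
  have hc_not : ∀ i, c i ∉ A := fun i => ((Denumerable.eqv S).symm i).2
  have hc_inj : Function.Injective c := by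
    intro i j hij
    exact (Denumerable.eqv S).symm.injective (Subtype.ext hij)
  have hc_surj : ∀ j, j ∉ A → ∃ i, c i = j := by
    intro j hj
    exact ⟨Denumerable.eqv S ⟨j, hj⟩, by simp [hcdef]⟩
  set f : ℕ → ℕ := fun k =>
    if h : k < A.card then L.get ⟨k, by omega⟩ else c (k - A.card) with hfdef
  have hfA : ∀ k, k < A.card → f k ∈ A := by
    intro k hk
    simp only [hfdef, dif_pos hk]
    exact (hmemL _).1 (L.get_mem _)
  have hfA' : ∀ k, ¬ k < A.card → f k ∉ A := by
    intro k hk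
    simp only [hfdef, dif_neg hk]
    exact hc_not _
  have hinj : Function.Injective f := by
    intro k₁ k₂ h
    by_cases h1 : k₁ < A.card <;> by_cases h2 : k₂ < A.card
    · simp only [hfdef, dif_pos h1, dif_pos h2] at h
      have := List.nodup_iff_injective_get.1 hnd h
      exact congrArg Fin.val this
    · exact absurd (h ▸ hfA k₁ h1) (hfA' k₂ h2)
    · exact absurd (h.symm ▸ hfA k₂ h2) (hfA' k₁ h1)
    · simp only [hfdef, dif_neg h1, dif_neg h2] at h
      have := hc_inj h
      omega
  have hsurj : Function.Surjective f := by
    intro j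
    by_cases hj : j ∈ A
    · obtain ⟨i, hi⟩ := List.mem_iff_get.1 ((hmemL j).2 hj)
      refine ⟨i, ?_⟩
      have : (i : ℕ) < A.card := by have := i.isLt; omega
      simp only [hfdef, dif_pos this]
      convert hi
    · obtain ⟨i, hi⟩ := hc_surj j hj
      refine ⟨A.card + i, ?_⟩
      simp only [hfdef, dif_neg (by omega : ¬ A.card + i < A.card)]
      simpa using hi
  refine ⟨Equiv.ofBijective f ⟨hinj, hsurj⟩, ?_, ?_⟩
  · intro k
    constructor
    · intro h
      by_contra hk
      exact hfA' k hk h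
    · exact hfA k
  · have hmB : B.card ≤ A.card := Finset.card_le_card hBA
    have hsub : (Finset.range B.card).image f ⊆ B := by
      intro j hj
      obtain ⟨k, hk, rfl⟩ := Finset.mem_image.1 hj
      rw [Finset.mem_range] at hk
      have hkA : k < A.card := lt_of_lt_of_le hk hmB
      have hkB : k < (B.sort (· ≤ ·)).length := by
        rw [Finset.length_sort]; exact hk
      have : f k = (B.sort (· ≤ ·)).get ⟨k, hkB⟩ := by
        simp only [hfdef, dif_pos hkA, hLdef, List.get_eq_getElem]
        exact List.getElem_append_left hkB
      rw [this]
      exact Finset.mem_sort (α := ℕ) (· ≤ ·) |>.1 (List.get_mem _ _)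
    have hcardim : ((Finset.range B.card).image f).card = B.card := by
      rw [Finset.card_image_of_injective _ hinj, Finset.card_range]
    exact Finset.eq_of_subset_of_card_le hsub (le_of_eq hcardim.symm)

variable {Z : Type*} [NormedAddCommGroup Z] [NormedSpace ℂ Z]

lemma coeff_sum (b : GreedyBasis ℂ Z) (ε : ℕ → ℂ) (A : Finset ℕ) (i : ℕ) :
    b.coeff i (∑ j ∈ A, ε j • b.e j) = if i ∈ A then ε i else 0 := by
  rw [map_sum]
  simp only [map_smul, b.biorth, smul_eq_mul, mul_ite, mul_one, mul_zero]
  exact Finset.sum_ite_eq A i ε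

/-- Projection bound: for unimodular coefficients, any sub-sum is `K`-bounded. -/
lemma proj_bound (b : GreedyBasis ℂ Z) (K : ℝ≥0) (hK : b.QuasiGreedy K)
    (ε : ℕ → ℂ) (hε : ∀ j, ‖ε j‖ = 1) {A B : Finset ℕ} (hBA : B ⊆ A) :
    ‖∑ j ∈ B, ε j • b.e j‖ ≤ K * ‖∑ j ∈ A, ε j • b.e j‖ := by
  obtain ⟨π, hπA, hπB⟩ := exists_perm_aux A B hBA
  set x := ∑ j ∈ A, ε j • b.e j with hx
  have hcoeff : ∀ i, b.coeff i x = if i ∈ A then ε i else 0 := coeff_sum b ε A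
  have hgreedy : b.Greedy x π := by
    intro k
    rw [hcoeff, hcoeff]
    by_cases h1 : π (k + 1) ∈ A
    · have hk1 : k + 1 < A.card := (hπA _).1 h1
      have h0 : π k ∈ A := (hπA _).2 (by omega)
      simp only [if_pos h1, if_pos h0, hε]
      exact le_refl 1
    · simp only [if_neg h1, norm_zero]
      positivity
  have hG := hK x π hgreedy B.card
  have himg : ∑ j ∈ (Finset.range B.card).image (π : ℕ → ℕ), ε j • b.e j
      = ∑ k ∈ Finset.range B.card, ε (π k) • b.e (π k) :=
    Finset.sum_image (fun a _ c _ hac => π.injective hac)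
  have heq : ∑ j ∈ B, ε j • b.e j = b.G B.card π x := by
    conv_lhs => rw [← hπB]
    rw [himg]
    unfold GreedyBasis.G
    refine Finset.sum_congr rfl fun k hk => ?_
    have hkA : π k ∈ A := by
      rw [hπA]
      rw [Finset.mem_range] at hk
      exact lt_of_lt_of_le hk (Finset.card_le_card hBA)
    rw [hcoeff, if_pos hkA]
  rw [heq]
  exact hG

/-- Convexity: reduce coefficients in `[-1,1]` to signs. -/
lemma conv_aux {W : Type*} [NormedAddCommGroup W] [NormedSpace ℝ W]
    (g : ℕ → W) (C : ℝ) (A : Finset ℕ)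
    (hsign : ∀ σ : ℕ → ℝ, (∀ j ∈ A, σ j = 1 ∨ σ j = -1) → ‖∑ j ∈ A, σ j • g j‖ ≤ C) :
    ∀ (s : Finset ℕ) (a : ℕ → ℝ), (∀ j ∈ A, |a j| ≤ 1) →
      (∀ j ∈ A, j ∉ s → a j = 1 ∨ a j = -1) → ‖∑ j ∈ A, a j • g j‖ ≤ C := by
  intro s
  classical
  induction s using Finset.induction with
  | empty =>
    intro a ha hs
    exact hsign a (fun j hj => hs j hj (by simp))
  | @insert j s hj ih =>
    intro a ha hs
    by_cases hjA : j ∈ A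
    · set t : ℝ := (a j + 1) / 2 with htdef
      have haj : |a j| ≤ 1 := ha j hjA
      have ht0 : 0 ≤ t := by rw [htdef]; rw [abs_le] at haj; linarith
      have ht1 : t ≤ 1 := by rw [htdef]; rw [abs_le] at haj; linarith
      set a₁ : ℕ → ℝ := Function.update a j 1 with ha1def
      set a₂ : ℕ → ℝ := Function.update a j (-1) with ha2def
      have key : ∑ i ∈ A, a i • g i
          = t • (∑ i ∈ A, a₁ i • g i) + (1 - t) • (∑ i ∈ A, a₂ i • g i) := by
        rw [Finset.smul_sum, Finset.smul_sum, ← Finset.sum_add_distrib]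
        refine Finset.sum_congr rfl fun i _ => ?_
        rw [smul_smul, smul_smul, ← add_smul]
        congr 1
        by_cases h : i = j
        · subst h
          simp only [ha1def, ha2def, Function.update_self, htdef]
          ring
        · simp only [ha1def, ha2def, Function.update_of_ne h]
          ring
      have hb1 : ‖∑ i ∈ A, a₁ i • g i‖ ≤ C := by
        refine ih a₁ ?_ ?_
        · intro i hi
          by_cases h : i = j
          · subst h; simp [ha1def]
          · simpa [ha1def, Function.update_of_ne h] using ha i hi
        · intro i hi his
          by_cases h : i = j
          · subst h; simp [ha1def]
          · rw [ha1def, Function.update_of_ne h]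
            exact hs i hi (by simp [h, his])
      have hb2 : ‖∑ i ∈ A, a₂ i • g i‖ ≤ C := by
        refine ih a₂ ?_ ?_
        · intro i hi
          by_cases h : i = j
          · subst h; simp [ha2def]
          · simpa [ha2def, Function.update_of_ne h] using ha i hi
        · intro i hi his
          by_cases h : i = j
          · subst h; simp [ha2def]
          · rw [ha2def, Function.update_of_ne h]
            exact hs i hi (by simp [h, his])
      calc ‖∑ i ∈ A, a i • g i‖
          ≤ ‖t • (∑ i ∈ A, a₁ i • g i)‖ + ‖(1 - t) • (∑ i ∈ A, a₂ i • g i)‖ := by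
            rw [key]; exact norm_add_le _ _
        _ = t * ‖∑ i ∈ A, a₁ i • g i‖ + (1 - t) * ‖∑ i ∈ A, a₂ i • g i‖ := by
            rw [norm_smul, norm_smul, Real.norm_of_nonneg ht0,
              Real.norm_of_nonneg (by linarith)]
        _ ≤ t * C + (1 - t) * C := by
            have hn1 : (0:ℝ) ≤ ‖∑ i ∈ A, a₁ i • g i‖ := norm_nonneg _
            nlinarith
        _ = C := by ring
    · refine ih a ha fun i hi his => ?_
      have : i ≠ j := fun h => hjA (h ▸ hi)
      exact hs i hi (by simp [this, his])

/-- Sign bound. -/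
lemma sign_bound (b : GreedyBasis ℂ Z) (K : ℝ≥0) (hK : b.QuasiGreedy K)
    (ε : ℕ → ℂ) (hε : ∀ j, ‖ε j‖ = 1) (A : Finset ℕ)
    (σ : ℕ → ℝ) (hσ : ∀ j ∈ A, σ j = 1 ∨ σ j = -1) :
    ‖∑ j ∈ A, σ j • (ε j • b.e j)‖ ≤ 2 * K * ‖∑ j ∈ A, ε j • b.e j‖ := by
  classical
  set P := A.filter (fun j => σ j = 1) with hP
  set N := A.filter (fun j => ¬ σ j = 1) with hN
  have hsplit : ∑ j ∈ A, σ j • (ε j • b.e j)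
      = ∑ j ∈ P, σ j • (ε j • b.e j) + ∑ j ∈ N, σ j • (ε j • b.e j) :=
    (Finset.sum_filter_add_sum_filter_not A _ _).symm
  have hPsum : ∑ j ∈ P, σ j • (ε j • b.e j) = ∑ j ∈ P, ε j • b.e j := by
    refine Finset.sum_congr rfl fun j hjP => ?_
    have : σ j = 1 := (Finset.mem_filter.1 hjP).2
    rw [this, one_smul]
  have hNsum : ∑ j ∈ N, σ j • (ε j • b.e j) = -∑ j ∈ N, ε j • b.e j := by
    rw [← Finset.sum_neg_distrib]
    refine Finset.sum_congr rfl fun j hjN => ?_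
    obtain ⟨hjA, hj1⟩ := Finset.mem_filter.1 hjN
    rcases hσ j hjA with h | h
    · exact absurd h hj1
    · rw [h, neg_one_smul]
  have h1 : ‖∑ j ∈ P, ε j • b.e j‖ ≤ K * ‖∑ j ∈ A, ε j • b.e j‖ :=
    proj_bound b K hK ε hε (Finset.filter_subset _ _)
  have h2 : ‖∑ j ∈ N, ε j • b.e j‖ ≤ K * ‖∑ j ∈ A, ε j • b.e j‖ :=
    proj_bound b K hK ε hε (Finset.filter_subset _ _)
  calc ‖∑ j ∈ A, σ j • (ε j • b.e j)‖
      ≤ ‖∑ j ∈ P, ε j • b.e j‖ + ‖∑ j ∈ N, ε j • b.e j‖ := by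
        rw [hsplit, hPsum, hNsum]
        exact (norm_add_le _ _).trans (by rw [norm_neg])
    _ ≤ 2 * K * ‖∑ j ∈ A, ε j • b.e j‖ := by linarith

/-- Complex multiplier bound. -/
lemma mult_bound (b : GreedyBasis ℂ Z) (K : ℝ≥0) (hK : b.QuasiGreedy K)
    (ε : ℕ → ℂ) (hε : ∀ j, ‖ε j‖ = 1) (A : Finset ℕ)
    (δ : ℕ → ℂ) (hδ : ∀ j ∈ A, ‖δ j‖ ≤ 1) :
    ‖∑ j ∈ A, δ j • (ε j • b.e j)‖ ≤ 4 * K * ‖∑ j ∈ A, ε j • b.e j‖ := by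
  have hre : ∀ j ∈ A, |(δ j).re| ≤ 1 :=
    fun j hj => (Complex.abs_re_le_norm (δ j)).trans (hδ j hj)
  have him : ∀ j ∈ A, |(δ j).im| ≤ 1 :=
    fun j hj => (Complex.abs_im_le_norm (δ j)).trans (hδ j hj)
  have hconv : ∀ a : ℕ → ℝ, (∀ j ∈ A, |a j| ≤ 1) →
      ‖∑ j ∈ A, a j • (ε j • b.e j)‖ ≤ 2 * K * ‖∑ j ∈ A, ε j • b.e j‖ := by
    intro a ha
    exact conv_aux (fun j => ε j • b.e j) _ A
      (fun σ hσ => sign_bound b K hK ε hε A σ hσ) A a ha (fun j hj hjs => absurd hj hjs)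
  have hdecomp : ∑ j ∈ A, δ j • (ε j • b.e j)
      = ∑ j ∈ A, (δ j).re • (ε j • b.e j)
        + Complex.I • ∑ j ∈ A, (δ j).im • (ε j • b.e j) := by
    rw [Finset.smul_sum, ← Finset.sum_add_distrib]
    refine Finset.sum_congr rfl fun j _ => ?_
    have hz : δ j = ((δ j).re : ℂ) + Complex.I * ((δ j).im : ℂ) := by
      rw [mul_comm, Complex.re_add_im]
    conv_lhs => rw [hz]
    rw [← Complex.coe_smul, ← Complex.coe_smul]
    module
  calc ‖∑ j ∈ A, δ j • (ε j • b.e j)‖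
      ≤ ‖∑ j ∈ A, (δ j).re • (ε j • b.e j)‖
        + ‖Complex.I • ∑ j ∈ A, (δ j).im • (ε j • b.e j)‖ := by
        rw [hdecomp]; exact norm_add_le _ _
    _ ≤ 2 * K * ‖∑ j ∈ A, ε j • b.e j‖ + 2 * K * ‖∑ j ∈ A, ε j • b.e j‖ := by
        have h1 := hconv _ hre
        have h2 := hconv _ him
        have : ‖Complex.I • ∑ j ∈ A, (δ j).im • (ε j • b.e j)‖
            = ‖∑ j ∈ A, (δ j).im • (ε j • b.e j)‖ := by
          rw [norm_smul, Complex.norm_I, one_mul]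
        rw [this]
        exact add_le_add h1 h2
    _ = 4 * K * ‖∑ j ∈ A, ε j • b.e j‖ := by ring

end Aux

/-- For a quasi-greedy basis of a complex Banach space with constant `K`, and unimodular
scalars `ε_j`: `(1/(4√2 K)) ‖∑_A e_j‖ ≤ ‖∑_A ε_j e_j‖ ≤ 4√2 K ‖∑_A e_j‖`. -/
theorem stmt18 {Z : Type*} [NormedAddCommGroup Z] [NormedSpace ℂ Z]
    (b : GreedyBasis ℂ Z) (K : ℝ≥0) (hK : b.QuasiGreedy K)
    (ε : ℕ → ℂ) (hε : ∀ j, ‖ε j‖ = 1) (A : Finset ℕ) :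
    (1 / (4 * Real.sqrt 2 * K)) * ‖∑ j ∈ A, b.e j‖ ≤ ‖∑ j ∈ A, ε j • b.e j‖ ∧
    ‖∑ j ∈ A, ε j • b.e j‖ ≤ 4 * Real.sqrt 2 * K * ‖∑ j ∈ A, b.e j‖ := by
  have hs2 : (1:ℝ) ≤ Real.sqrt 2 := by
    rw [show (1:ℝ) = Real.sqrt 1 by simp]
    exact Real.sqrt_le_sqrt (by norm_num)
  have hK0 : (0:ℝ) ≤ (K:ℝ) := K.coe_nonneg
  have hup : ‖∑ j ∈ A, ε j • b.e j‖ ≤ 4 * K * ‖∑ j ∈ A, b.e j‖ := by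
    have := mult_bound b K hK (fun _ => 1) (fun _ => by simp) A ε
      (fun j _ => le_of_eq (hε j))
    simpa [one_smul] using this
  have hlow : ‖∑ j ∈ A, b.e j‖ ≤ 4 * K * ‖∑ j ∈ A, ε j • b.e j‖ := by
    have hmb := mult_bound b K hK ε hε A (fun j => starRingEnd ℂ (ε j))
      (fun j _ => by rw [RCLike.norm_conj]; exact le_of_eq (hε j))
    have hsum : ∑ j ∈ A, (starRingEnd ℂ (ε j)) • (ε j • b.e j) = ∑ j ∈ A, b.e j := by
      refine Finset.sum_congr rfl fun j _ => ?_
      rw [smul_smul]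
      have h1 : starRingEnd ℂ (ε j) * ε j = 1 := by
        rw [RCLike.conj_mul, hε j]
        norm_num
      rw [h1, one_smul]
    rwa [hsum] at hmb
  have hx0 : (0:ℝ) ≤ ‖∑ j ∈ A, ε j • b.e j‖ := norm_nonneg _
  have he0 : (0:ℝ) ≤ ‖∑ j ∈ A, b.e j‖ := norm_nonneg _
  have hprod1 : (0:ℝ) ≤ (Real.sqrt 2 - 1) * K * ‖∑ j ∈ A, ε j • b.e j‖ :=
    mul_nonneg (mul_nonneg (by linarith) hK0) hx0
  have hprod2 : (0:ℝ) ≤ (Real.sqrt 2 - 1) * K * ‖∑ j ∈ A, b.e j‖ :=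
    mul_nonneg (mul_nonneg (by linarith) hK0) he0
  constructor
  · by_cases hKz : (K:ℝ) = 0
    · rw [hKz]
      simp
    · have hKpos : (0:ℝ) < (K:ℝ) := lt_of_le_of_ne hK0 (Ne.symm hKz)
      have hpos : (0:ℝ) < 4 * Real.sqrt 2 * (K:ℝ) := by positivity
      rw [div_mul_eq_mul_div, one_mul, div_le_iff₀ hpos]
      nlinarith
  · nlinarith
end
end

section
/- Let (e_j) be a quasi-greedy basis of a complex Banach space X with constant K. Then for every finite set A and complex scalars (α_j), (1/(8√2 K²))·(min_{j∈A}|α_j|)·‖Σ_{j∈A} e_j‖ ≤ ‖Σ_{j∈A} α_j e_j‖ ≤ 4√2 K·(max_{j∈A}|α_j|)·‖Σ_{j∈A} e_j‖. -/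
open Finset NNReal ENNReal Filter

noncomputable section

variable (𝕜 X : Type*) [RCLike 𝕜] [NormedAddCommGroup X] [NormedSpace 𝕜 X]

variable {𝕜 X}

noncomputable section
namespace Aux19

def extF (l : List ℕ) : ℕ → ℕ := fun k =>
  if h : k < l.length then l.get ⟨k, h⟩ else Nat.nth (fun m => m ∉ l) (k - l.length)

lemma infinite_not_mem (l : List ℕ) : {m : ℕ | m ∉ l}.Infinite := by
  have h : {m : ℕ | m ∈ l}.Finite := l.toFinset.finite_toSet.subset (by intro x hx; simpa using hx)
  simpa [Set.compl_setOf] using h.infinite_compl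

lemma extF_bijective (l : List ℕ) (hl : l.Nodup) : Function.Bijective (extF l) := by
  constructor
  · intro k₁ k₂ h
    unfold extF at h
    split_ifs at h with h1 h2 h2
    · exact congrArg Fin.val (List.nodup_iff_injective_get.mp hl h)
    · exact absurd (h ▸ List.get_mem l ⟨k₁, h1⟩) (Nat.nth_mem_of_infinite (infinite_not_mem l) _)
    · exact absurd (h.symm ▸ List.get_mem l ⟨k₂, h2⟩) (Nat.nth_mem_of_infinite (infinite_not_mem l) _)
    · have := Nat.nth_injective (infinite_not_mem l) h
      omega
  · intro m
    by_cases hm : m ∈ l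
    · obtain ⟨⟨k, hk⟩, h⟩ := List.mem_iff_get.mp hm
      exact ⟨k, by simpa [extF, hk] using h⟩
    · have : m ∈ Set.range (Nat.nth fun m => m ∉ l) := by
        rw [Nat.range_nth_of_infinite (infinite_not_mem l)]; exact hm
      obtain ⟨t, ht⟩ := this
      refine ⟨t + l.length, ?_⟩
      have h1 : ¬ t + l.length < l.length := by omega
      simp [extF, h1, ht]

def extPerm (l : List ℕ) (hl : l.Nodup) : Equiv.Perm ℕ := Equiv.ofBijective _ (extF_bijective l hl)

lemma extPerm_lt (l : List ℕ) (hl : l.Nodup) (k : ℕ) (h : k < l.length) :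
    extPerm l hl k = l.get ⟨k, h⟩ := dif_pos h

lemma extPerm_ge (l : List ℕ) (hl : l.Nodup) (k : ℕ) (h : ¬ k < l.length) :
    extPerm l hl k ∉ l := by
  show extF l k ∉ l
  unfold extF
  rw [dif_neg h]
  exact Nat.nth_mem_of_infinite (infinite_not_mem l) _

end Aux19
namespace Aux19
open List Finset

variable {Z : Type*} [NormedAddCommGroup Z] [NormedSpace ℂ Z]

lemma coeff_finsum (b : GreedyBasis ℂ Z) (β : ℕ → ℂ) (A : Finset ℕ) (i : ℕ) :
    b.coeff i (∑ j ∈ A, β j • b.e j) = if i ∈ A then β i else 0 := by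
  rw [map_sum]
  simp only [map_smul, b.biorth, smul_eq_mul, mul_ite, mul_one, mul_zero]
  simp [Finset.sum_ite_eq]

lemma engine (b : GreedyBasis ℂ Z) (K : ℝ≥0) (hK : b.QuasiGreedy K)
    (β : ℕ → ℂ) (A B : Finset ℕ) (hBA : B ⊆ A) (hβ : ∀ j, j ∉ A → β j = 0)
    (hgr : ∀ i ∈ B, ∀ j ∈ A, j ∉ B → ‖β j‖ ≤ ‖β i‖) :
    ‖∑ j ∈ B, β j • b.e j‖ ≤ K * ‖∑ j ∈ A, β j • b.e j‖ := by
  classical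
  set r : ℕ → ℕ → Prop := fun i j => ‖β j‖ ≤ ‖β i‖ with hrdef
  haveI : DecidableRel r := Classical.decRel _
  haveI : IsTotal ℕ r := ⟨fun i j => (le_total ‖β j‖ ‖β i‖).imp id id⟩
  haveI : IsTrans ℕ r := ⟨fun a b c h1 h2 => le_trans h2 h1⟩
  set LB := List.insertionSort r B.toList with hLBdef
  set LR := List.insertionSort r (A \ B).toList with hLRdef
  set l := LB ++ LR with hldef
  have hpB : LB ~ B.toList := List.perm_insertionSort r _
  have hpR : LR ~ (A \ B).toList := List.perm_insertionSort r _
  have hmemB : ∀ {j}, j ∈ LB ↔ j ∈ B := by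
    intro j; rw [hpB.mem_iff, Finset.mem_toList]
  have hmemR : ∀ {j}, j ∈ LR ↔ j ∈ A \ B := by
    intro j; rw [hpR.mem_iff, Finset.mem_toList]
  have hnodup : l.Nodup := by
    refine List.nodup_append.mpr ⟨hpB.nodup_iff.mpr B.nodup_toList,
      hpR.nodup_iff.mpr (A \ B).nodup_toList, ?_⟩
    intro a haB c haR hac
    subst hac
    exact (Finset.mem_sdiff.mp (hmemR.mp haR)).2 (hmemB.mp haB)
  have hto : l.toFinset = A := by
    rw [hldef, List.toFinset_append,
      List.toFinset_eq_of_perm _ _ hpB, List.toFinset_eq_of_perm _ _ hpR,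
      Finset.toList_toFinset, Finset.toList_toFinset]
    exact Finset.union_sdiff_of_subset hBA
  have hsorted : l.Pairwise r := by
    rw [hldef, List.pairwise_append]
    refine ⟨List.pairwise_insertionSort r _, List.pairwise_insertionSort r _, ?_⟩
    intro a ha c hc
    have haB := hmemB.mp ha
    have hcR := Finset.mem_sdiff.mp (hmemR.mp hc)
    exact hgr a haB c hcR.1 hcR.2
  set π := extPerm l hnodup with hπdef
  set x := ∑ j ∈ A, β j • b.e j with hxdef
  have hcoeff : ∀ i, b.coeff i x = β i := by
    intro i
    rw [hxdef, coeff_finsum]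
    split_ifs with h
    · rfl
    · exact (hβ i h).symm
  have hgreedy : b.Greedy x π := by
    intro k
    rw [hcoeff, hcoeff]
    by_cases h1 : k + 1 < l.length
    · have h0 : k < l.length := by omega
      rw [extPerm_lt l hnodup _ h1, extPerm_lt l hnodup _ h0]
      exact hsorted.rel_get_of_lt (Fin.mk_lt_mk.mpr (by omega))
    · have hnm : π (k + 1) ∉ l := extPerm_ge l hnodup _ h1
      have : β (π (k + 1)) = 0 := by
        refine hβ _ ?_
        rw [← hto]
        simpa using hnm
      rw [this]
      simp
  have hNl : LB.length ≤ l.length := by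
    rw [hldef, List.length_append]; omega
  have himg : (Finset.range LB.length).image π = B := by
    ext j
    simp only [Finset.mem_image, Finset.mem_range]
    constructor
    · rintro ⟨k, hk, rfl⟩
      have hkl : k < l.length := lt_of_lt_of_le hk hNl
      rw [extPerm_lt l hnodup k hkl]
      have : l.get ⟨k, hkl⟩ = LB.get ⟨k, hk⟩ := List.getElem_append_left hk
      rw [this]
      exact hmemB.mp (List.get_mem LB ⟨k, hk⟩)
    · intro hj
      obtain ⟨⟨k, hk⟩, hget⟩ := List.mem_iff_get.mp (hmemB.mpr hj)
      refine ⟨k, hk, ?_⟩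
      have hkl : k < l.length := lt_of_lt_of_le hk hNl
      rw [extPerm_lt l hnodup k hkl]
      rw [show l.get ⟨k, hkl⟩ = LB.get ⟨k, hk⟩ from List.getElem_append_left hk]
      exact hget
  have hG : b.G LB.length π x = ∑ j ∈ B, β j • b.e j := by
    rw [GreedyBasis.G]
    rw [show (∑ k ∈ Finset.range LB.length, b.coeff (π k) x • b.e (π k))
        = ∑ k ∈ Finset.range LB.length, β (π k) • b.e (π k) by
      exact Finset.sum_congr rfl fun k _ => by rw [hcoeff]]
    rw [← himg, Finset.sum_image (fun a _ c _ h => π.injective h)]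
  calc ‖∑ j ∈ B, β j • b.e j‖ = ‖b.G LB.length π x‖ := by rw [hG]
    _ ≤ K * ‖x‖ := hK x π hgreedy LB.length

end Aux19
namespace Aux19
open Finset

variable {Z : Type*} [NormedAddCommGroup Z] [NormedSpace ℂ Z]

/-- Abel-type bound: coefficients in `[0, C]`, bounds on "upper sets" of `c`. -/
lemma abel_dec (v : ℕ → Z) (M : ℝ) (A : Finset ℕ) :
    ∀ (c : ℕ → ℝ) (C : ℝ), 0 ≤ C → (∀ j ∈ A, 0 ≤ c j ∧ c j ≤ C) →
    (∀ B ⊆ A, (∀ i ∈ B, ∀ j ∈ A, j ∉ B → c j ≤ c i) → ‖∑ j ∈ B, v j‖ ≤ M) →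
    ‖∑ j ∈ A, c j • v j‖ ≤ C * M := by
  induction A using Finset.strongInduction with
  | _ A ih =>
    intro c C hC hc hB
    have hM : 0 ≤ M := by
      have := hB ∅ (Finset.empty_subset _) (by simp)
      simpa using this
    rcases A.eq_empty_or_nonempty with rfl | hA
    · simpa using mul_nonneg hC hM
    obtain ⟨j0, hj0, hmin⟩ := A.exists_min_image c hA
    have hm0 : 0 ≤ c j0 := (hc j0 hj0).1
    have hmC : c j0 ≤ C := (hc j0 hj0).2
    have h1 : ∑ j ∈ A, c j • v j
        = c j0 • (∑ j ∈ A, v j) + ∑ j ∈ A.erase j0, (c j - c j0) • v j := by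
      rw [Finset.sum_erase _ (by simp), Finset.smul_sum, ← Finset.sum_add_distrib]
      refine Finset.sum_congr rfl fun j _ => ?_
      rw [sub_smul]; abel
    have hAA : ‖∑ j ∈ A, v j‖ ≤ M := hB A (subset_refl _) (fun i hi j hj hj' => absurd hj hj')
    have hIH : ‖∑ j ∈ A.erase j0, (c j - c j0) • v j‖ ≤ (C - c j0) * M := by
      refine ih (A.erase j0) (Finset.erase_ssubset hj0) _ _ (by linarith) ?_ ?_
      · intro j hj
        have hj' := Finset.mem_of_mem_erase hj
        exact ⟨by have := hmin j hj'; linarith, by have := (hc j hj').2; linarith⟩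
      · intro B hBsub hup
        refine hB B (hBsub.trans (Finset.erase_subset _ _)) ?_
        intro i hi j hj hjB
        by_cases hjj0 : j = j0
        · subst hjj0
          exact hmin i (Finset.mem_of_mem_erase (hBsub hi))
        · have hje : j ∈ A.erase j0 := Finset.mem_erase.mpr ⟨hjj0, hj⟩
          have := hup i hi j hje hjB
          linarith
    calc ‖∑ j ∈ A, c j • v j‖
        ≤ ‖c j0 • (∑ j ∈ A, v j)‖ + ‖∑ j ∈ A.erase j0, (c j - c j0) • v j‖ := by
          rw [h1]; exact norm_add_le _ _
      _ ≤ c j0 * M + (C - c j0) * M := by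
          refine add_le_add ?_ hIH
          rw [norm_smul, Real.norm_eq_abs, abs_of_nonneg hm0]
          exact mul_le_mul_of_nonneg_left hAA hm0
      _ = C * M := by ring

/-- Abel-type bound with increasing coefficients: bounds on "lower sets" of `c`. -/
lemma abel_inc (v : ℕ → Z) (M : ℝ) (A : Finset ℕ) (c : ℕ → ℝ) (C : ℝ)
    (hC : 0 ≤ C) (hc : ∀ j ∈ A, 0 ≤ c j ∧ c j ≤ C)
    (hB : ∀ B ⊆ A, (∀ i ∈ B, ∀ j ∈ A, j ∉ B → c i ≤ c j) → ‖∑ j ∈ B, v j‖ ≤ M) :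
    ‖∑ j ∈ A, c j • v j‖ ≤ 2 * C * M := by
  have hM : 0 ≤ M := by
    have := hB ∅ (Finset.empty_subset _) (by simp)
    simpa using this
  rcases A.eq_empty_or_nonempty with rfl | hA
  · simpa using by positivity
  obtain ⟨j1, hj1, hmax⟩ := A.exists_max_image c hA
  have h1 : ∑ j ∈ A, c j • v j
      = c j1 • (∑ j ∈ A, v j) - ∑ j ∈ A, (c j1 - c j) • v j := by
    rw [Finset.smul_sum, ← Finset.sum_sub_distrib]
    refine Finset.sum_congr rfl fun j _ => ?_
    rw [sub_smul]; abel
  have hAA : ‖∑ j ∈ A, v j‖ ≤ M := hB A (subset_refl _) (fun i hi j hj hj' => absurd hj hj')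
  have h2 : ‖∑ j ∈ A, (c j1 - c j) • v j‖ ≤ c j1 * M := by
    refine abel_dec v M A _ (c j1) (hc j1 hj1).1 ?_ ?_
    · intro j hj
      exact ⟨by have := hmax j hj; linarith, by have := (hc j hj).1; linarith⟩
    · intro B hBsub hup
      refine hB B hBsub ?_
      intro i hi j hj hjB
      have := hup i hi j hj hjB
      linarith
  calc ‖∑ j ∈ A, c j • v j‖
      ≤ ‖c j1 • (∑ j ∈ A, v j)‖ + ‖∑ j ∈ A, (c j1 - c j) • v j‖ := by
        rw [h1]; exact norm_sub_le _ _
    _ ≤ c j1 * M + c j1 * M := by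
        refine add_le_add ?_ h2
        rw [norm_smul, Real.norm_eq_abs, abs_of_nonneg (hc j1 hj1).1]
        exact mul_le_mul_of_nonneg_left hAA (hc j1 hj1).1
    _ ≤ 2 * C * M := by nlinarith [(hc j1 hj1).2]

end Aux19
namespace Aux19
open Finset

variable {Z : Type*} [NormedAddCommGroup Z] [NormedSpace ℂ Z]

lemma real_smul_eq (r : ℝ) (z : Z) : (r : ℂ) • z = r • z := by
  rw [← Complex.coe_algebraMap, algebraMap_smul]

lemma complex_decomp (v : ℕ → Z) (M : ℝ) (A : Finset ℕ) (γ : ℕ → ℂ) (C : ℝ)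
    (hC : 0 ≤ C) (hγ : ∀ j ∈ A, ‖γ j‖ ≤ C)
    (hB : ∀ B ⊆ A, ‖∑ j ∈ B, v j‖ ≤ M) :
    ‖∑ j ∈ A, γ j • v j‖ ≤ 4 * C * M := by
  classical
  set w : ℕ → Z := fun j => Complex.I • v j with hw
  set c1 : ℕ → ℝ := fun j => max (γ j).re 0 with hc1
  set c2 : ℕ → ℝ := fun j => max (-(γ j).re) 0 with hc2
  set c3 : ℕ → ℝ := fun j => max (γ j).im 0 with hc3
  set c4 : ℕ → ℝ := fun j => max (-(γ j).im) 0 with hc4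
  have hwB : ∀ B ⊆ A, ‖∑ j ∈ B, w j‖ ≤ M := by
    intro B hBsub
    rw [hw]
    simp only [← Finset.smul_sum]
    rw [norm_smul, Complex.norm_I, one_mul]
    exact hB B hBsub
  have key : ∀ (c : ℕ → ℝ) (u : ℕ → Z), (∀ B ⊆ A, ‖∑ j ∈ B, u j‖ ≤ M) →
      (∀ j ∈ A, 0 ≤ c j ∧ c j ≤ C) → ‖∑ j ∈ A, c j • u j‖ ≤ C * M := by
    intro c u hu hc
    exact abel_dec u M A c C hC hc (fun B hB' _ => hu B hB')
  have hre : ∀ j ∈ A, γ j • v j = (c1 j • v j - c2 j • v j) + (c3 j • w j - c4 j • w j) := by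
    intro j _
    have e1 : c1 j • v j - c2 j • v j = (γ j).re • v j := by
      rw [← sub_smul, hc1, hc2]
      simp [max_zero_sub_max_neg_zero_eq_self]
    have e2 : c3 j • w j - c4 j • w j = (γ j).im • w j := by
      rw [← sub_smul, hc3, hc4]
      simp [max_zero_sub_max_neg_zero_eq_self]
    rw [e1, e2, hw]
    have : γ j = ((γ j).re : ℂ) + ((γ j).im : ℂ) * Complex.I := (Complex.re_add_im (γ j)).symm
    calc γ j • v j = (((γ j).re : ℂ) + ((γ j).im : ℂ) * Complex.I) • v j := by rw [← this]
      _ = ((γ j).re : ℂ) • v j + ((γ j).im : ℂ) • Complex.I • v j := by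
          rw [add_smul, mul_smul]
      _ = (γ j).re • v j + (γ j).im • Complex.I • v j := by
          rw [real_smul_eq, real_smul_eq]
  have hsplit : ∑ j ∈ A, γ j • v j
      = ((∑ j ∈ A, c1 j • v j) - (∑ j ∈ A, c2 j • v j))
        + ((∑ j ∈ A, c3 j • w j) - (∑ j ∈ A, c4 j • w j)) := by
    rw [← Finset.sum_sub_distrib, ← Finset.sum_sub_distrib, ← Finset.sum_add_distrib]
    exact Finset.sum_congr rfl hre
  have b1 : ‖∑ j ∈ A, c1 j • v j‖ ≤ C * M := by
    refine key c1 v hB fun j hj => ⟨le_max_right _ _, max_le ?_ hC⟩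
    calc (γ j).re ≤ |(γ j).re| := le_abs_self _
      _ ≤ ‖γ j‖ := by exact Complex.abs_re_le_norm _
      _ ≤ C := hγ j hj
  have b2 : ‖∑ j ∈ A, c2 j • v j‖ ≤ C * M := by
    refine key c2 v hB fun j hj => ⟨le_max_right _ _, max_le ?_ hC⟩
    calc -(γ j).re ≤ |(γ j).re| := neg_le_abs _
      _ ≤ ‖γ j‖ := by exact Complex.abs_re_le_norm _
      _ ≤ C := hγ j hj
  have b3 : ‖∑ j ∈ A, c3 j • w j‖ ≤ C * M := by
    refine key c3 w hwB fun j hj => ⟨le_max_right _ _, max_le ?_ hC⟩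
    calc (γ j).im ≤ |(γ j).im| := le_abs_self _
      _ ≤ ‖γ j‖ := by exact Complex.abs_im_le_norm _
      _ ≤ C := hγ j hj
  have b4 : ‖∑ j ∈ A, c4 j • w j‖ ≤ C * M := by
    refine key c4 w hwB fun j hj => ⟨le_max_right _ _, max_le ?_ hC⟩
    calc -(γ j).im ≤ |(γ j).im| := neg_le_abs _
      _ ≤ ‖γ j‖ := by exact Complex.abs_im_le_norm _
      _ ≤ C := hγ j hj
  calc ‖∑ j ∈ A, γ j • v j‖
      ≤ ‖(∑ j ∈ A, c1 j • v j) - (∑ j ∈ A, c2 j • v j)‖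
        + ‖(∑ j ∈ A, c3 j • w j) - (∑ j ∈ A, c4 j • w j)‖ := by
        rw [hsplit]; exact norm_add_le _ _
    _ ≤ (‖∑ j ∈ A, c1 j • v j‖ + ‖∑ j ∈ A, c2 j • v j‖)
        + (‖∑ j ∈ A, c3 j • w j‖ + ‖∑ j ∈ A, c4 j • w j‖) :=
        add_le_add (norm_sub_le _ _) (norm_sub_le _ _)
    _ ≤ 4 * C * M := by linarith

end Aux19
open Finset in
/-- For a quasi-greedy basis of a complex Banach space with constant `K`, finite `A`
and complex scalars `α_j`:
`(1/(8√2 K²)) (min_A |α_j|) ‖∑_A e_j‖ ≤ ‖∑_A α_j e_j‖ ≤ 4√2 K (max_A |α_j|) ‖∑_A e_j‖`. -/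
theorem stmt19 {Z : Type*} [NormedAddCommGroup Z] [NormedSpace ℂ Z]
    (b : GreedyBasis ℂ Z) (K : ℝ≥0) (hK : b.QuasiGreedy K)
    (α : ℕ → ℂ) (A : Finset ℕ) (hA : A.Nonempty) :
    (1 / (8 * Real.sqrt 2 * K ^ 2)) * (A.inf' hA fun j => ‖α j‖) * ‖∑ j ∈ A, b.e j‖ ≤
      ‖∑ j ∈ A, α j • b.e j‖ ∧
    ‖∑ j ∈ A, α j • b.e j‖ ≤
      4 * Real.sqrt 2 * K * (A.sup' hA fun j => ‖α j‖) * ‖∑ j ∈ A, b.e j‖ := by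
  classical
  have hKnn : (0:ℝ) ≤ (K:ℝ) := K.coe_nonneg
  have hs2 : (1:ℝ) ≤ Real.sqrt 2 := by
    rw [show (1:ℝ) = Real.sqrt 1 by simp]
    exact Real.sqrt_le_sqrt (by norm_num)
  have hn1 : (0:ℝ) ≤ ‖∑ j ∈ A, b.e j‖ := norm_nonneg _
  -- subset sums of the basis vectors
  have sub1 : ∀ B ⊆ A, ‖∑ j ∈ B, b.e j‖ ≤ (K:ℝ) * ‖∑ j ∈ A, b.e j‖ := by
    intro B hBA
    have h := Aux19.engine b K hK (fun j => if j ∈ A then (1:ℂ) else 0) A B hBA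
      (fun j hj => if_neg hj)
      (fun i hi j hj hjB => by simp [if_pos hj, if_pos (hBA hi)])
    have e1 : ∑ j ∈ B, (if j ∈ A then (1:ℂ) else 0) • b.e j = ∑ j ∈ B, b.e j :=
      Finset.sum_congr rfl fun j hj => by rw [if_pos (hBA hj), one_smul]
    have e2 : ∑ j ∈ A, (if j ∈ A then (1:ℂ) else 0) • b.e j = ∑ j ∈ A, b.e j :=
      Finset.sum_congr rfl fun j hj => by rw [if_pos hj, one_smul]
    rwa [e1, e2] at h
  constructor
  · -- lower bound
    set a := A.inf' hA fun j => ‖α j‖ with hadef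
    have ha0 : 0 ≤ a := Finset.le_inf' hA _ fun j _ => norm_nonneg _
    by_cases hzero : ∃ j ∈ A, α j = 0
    · obtain ⟨j, hj, hαj⟩ := hzero
      have : a = 0 := le_antisymm (by
        have := Finset.inf'_le (fun j => ‖α j‖) hj
        rwa [hαj, norm_zero] at this) ha0
      rw [this, mul_zero, zero_mul]
      exact norm_nonneg _
    · push_neg at hzero
      have hapos : 0 < a := by
        obtain ⟨j, hj, hja⟩ := Finset.exists_mem_eq_inf' hA fun j => ‖α j‖
        rw [hadef, hja]
        exact norm_pos_iff.mpr (hzero j hj)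
      by_cases hK0 : (K:ℝ) = 0
      · have hz : 1 / (8 * Real.sqrt 2 * (K:ℝ) ^ 2) = 0 := by
          rw [hK0]; norm_num
        rw [hz, zero_mul, zero_mul]
        exact norm_nonneg _
      have hKpos : 0 < (K:ℝ) := lt_of_le_of_ne hKnn (Ne.symm hK0)
      set θ : ℕ → ℂ := fun j => if j ∈ A then ((‖α j‖ : ℝ) : ℂ)⁻¹ * α j else 0 with hθdef
      have hθnorm : ∀ j ∈ A, ‖θ j‖ = 1 := by
        intro j hj
        have hαpos : 0 < ‖α j‖ := norm_pos_iff.mpr (hzero j hj)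
        simp only [hθdef, if_pos hj, norm_mul, norm_inv, Complex.norm_real, abs_norm, Real.norm_eq_abs, abs_of_nonneg (norm_nonneg (α j))]
        exact inv_mul_cancel₀ (ne_of_gt hαpos)
      have hθne : ∀ j ∈ A, θ j ≠ 0 := by
        intro j hj h
        have := hθnorm j hj
        rw [h, norm_zero] at this
        norm_num at this
      set y := ∑ j ∈ A, θ j • b.e j with hydef
      have hy0 : 0 ≤ ‖y‖ := norm_nonneg _
      have sub2 : ∀ B ⊆ A, ‖∑ j ∈ B, θ j • b.e j‖ ≤ (K:ℝ) * ‖y‖ := by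
        intro B hBA
        exact Aux19.engine b K hK θ A B hBA (fun j hj => if_neg hj)
          (fun i hi j hj hjB => by rw [hθnorm j hj, hθnorm i (hBA hi)])
      have step3 : ‖∑ j ∈ A, b.e j‖ ≤ 4 * 1 * ((K:ℝ) * ‖y‖) := by
        have h := Aux19.complex_decomp (fun j => θ j • b.e j) ((K:ℝ) * ‖y‖) A
          (fun j => (θ j)⁻¹) 1 zero_le_one
          (fun j hj => by rw [norm_inv, hθnorm j hj]; norm_num)
          sub2
        have e1 : ∑ j ∈ A, (θ j)⁻¹ • θ j • b.e j = ∑ j ∈ A, b.e j := by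
          refine Finset.sum_congr rfl fun j hj => ?_
          rw [smul_smul, inv_mul_cancel₀ (hθne j hj), one_smul]
        rwa [e1] at h
      have step4 : a * ‖y‖ ≤ 2 * 1 * ((K:ℝ) * ‖∑ j ∈ A, α j • b.e j‖) := by
        have hc : ∀ j ∈ A, 0 ≤ a * ‖α j‖⁻¹ ∧ a * ‖α j‖⁻¹ ≤ 1 := by
          intro j hj
          have hαpos : 0 < ‖α j‖ := norm_pos_iff.mpr (hzero j hj)
          constructor
          · positivity
          · rw [← mul_inv_cancel₀ (ne_of_gt hαpos)]
            exact mul_le_mul_of_nonneg_right (Finset.inf'_le _ hj) (by positivity)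
        have hB : ∀ B ⊆ A, (∀ i ∈ B, ∀ j ∈ A, j ∉ B → a * ‖α i‖⁻¹ ≤ a * ‖α j‖⁻¹) →
            ‖∑ j ∈ B, α j • b.e j‖ ≤ (K:ℝ) * ‖∑ j ∈ A, α j • b.e j‖ := by
          intro B hBA hlow
          have h := Aux19.engine b K hK (fun j => if j ∈ A then α j else 0) A B hBA
            (fun j hj => if_neg hj) ?_
          · have e1 : ∑ j ∈ B, (if j ∈ A then α j else 0) • b.e j = ∑ j ∈ B, α j • b.e j :=
              Finset.sum_congr rfl fun j hj => by rw [if_pos (hBA hj)]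
            have e2 : ∑ j ∈ A, (if j ∈ A then α j else 0) • b.e j = ∑ j ∈ A, α j • b.e j :=
              Finset.sum_congr rfl fun j hj => by rw [if_pos hj]
            rwa [e1, e2] at h
          · intro i hi j hj hjB
            simp only [if_pos hj, if_pos (hBA hi)]
            have hipos : 0 < ‖α i‖ := norm_pos_iff.mpr (hzero i (hBA hi))
            have hjpos : 0 < ‖α j‖ := norm_pos_iff.mpr (hzero j hj)
            have := hlow i hi j hj hjB
            have h2 : ‖α i‖⁻¹ ≤ ‖α j‖⁻¹ := le_of_mul_le_mul_left this hapos
            exact (inv_le_inv₀ hipos hjpos).mp h2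
        have h := Aux19.abel_inc (fun j => α j • b.e j)
          ((K:ℝ) * ‖∑ j ∈ A, α j • b.e j‖) A (fun j => a * ‖α j‖⁻¹) 1 zero_le_one hc hB
        have e1 : ∑ j ∈ A, (a * ‖α j‖⁻¹) • (α j • b.e j) = a • y := by
          rw [hydef, Finset.smul_sum]
          refine Finset.sum_congr rfl fun j hj => ?_
          rw [← Aux19.real_smul_eq, ← Aux19.real_smul_eq a, smul_smul, smul_smul, hθdef]
          simp only [if_pos hj]
          push_cast
          ring_nf
        rw [e1, norm_smul, Real.norm_eq_abs, abs_of_nonneg ha0] at h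
        exact h
      -- combine
      have chain : a * ‖∑ j ∈ A, b.e j‖ ≤ 8 * (K:ℝ)^2 * ‖∑ j ∈ A, α j • b.e j‖ := by
        nlinarith [mul_le_mul_of_nonneg_left step3 ha0,
          mul_le_mul_of_nonneg_left step4 (by positivity : (0:ℝ) ≤ 4 * (K:ℝ))]
      have h8 : 0 < 8 * Real.sqrt 2 * (K:ℝ) ^ 2 := by positivity
      rw [div_mul_eq_mul_div, one_mul, div_mul_eq_mul_div, div_le_iff₀ h8]
      nlinarith [chain, norm_nonneg (∑ j ∈ A, α j • b.e j),
        mul_nonneg (mul_nonneg (by positivity : (0:ℝ) ≤ 8 * (K:ℝ)^2)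
          (norm_nonneg (∑ j ∈ A, α j • b.e j))) (by linarith : (0:ℝ) ≤ Real.sqrt 2 - 1)]
  · -- upper bound
    have hCsup : 0 ≤ A.sup' hA fun j => ‖α j‖ := by
      obtain ⟨j, hj⟩ := hA
      exact le_trans (norm_nonneg (α j)) (Finset.le_sup' (fun j => ‖α j‖) hj)
    have h := Aux19.complex_decomp b.e ((K:ℝ) * ‖∑ j ∈ A, b.e j‖) A α
      (A.sup' hA fun j => ‖α j‖) hCsup
      (fun j hj => Finset.le_sup' (fun j => ‖α j‖) hj) sub1
    nlinarith [h, mul_nonneg (mul_nonneg hKnn hCsup) hn1]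
end
end
end
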